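/- Let T be an isometry of a nondegenerate space (V,B) over a field F of characteristic different from 2, with V ≠ 0, let m ∈ F[X] be the minimal polynomial of T over F, and let A = F[X]/(m). Then the image t of X in A is a unit of A, and there exists a unique F-algebra automorphism σ of A with σ(t) = t⁻¹. -/

import Mathlib

/-!
The minimal polynomial `m` of `T` also annihilates `T⁻¹`: since `T⁻¹` is the `B`-adjoint of `T`,
`p(T⁻¹)` is the adjoint of `p(T)` for every polynomial `p`, and nondegeneracy makes `m(T) = 0`
force `m(T⁻¹) = 0`. In `A = F[X]/(m) ≅ F[T]` the class `t` of `X` corresponds to `T`, so `t` is a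
unit and `t⁻¹` is again a root of `m`; hence `X ↦ t⁻¹` defines an `F`-algebra endomorphism of `A`,
which is an involution and so an automorphism. It is unique because `A` is generated by `t`.
-/

/-- The group of isometries of a bilinear space `(V, B)`, as a subgroup of the
group of linear automorphisms of `V`. -/
def isometryGroup (F : Type*) [Field F] {V : Type*} [AddCommGroup V] [Module F V]
    (B : LinearMap.BilinForm F V) : Subgroup (V ≃ₗ[F] V) where
  carrier := {T | ∀ u v : V, B (T u) (T v) = B u v}
  one_mem' := by intro u v; rfl
  mul_mem' := by
    intro a b ha hb u v
    have h1 : (a * b) u = a (b u) := rfl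
    have h2 : (a * b) v = a (b v) := rfl
    rw [h1, h2, ha, hb]
  inv_mem' := by
    intro a ha u v
    have h := ha (a⁻¹ u) (a⁻¹ v)
    have h1 : a (a⁻¹ u) = u := a.apply_symm_apply u
    have h2 : a (a⁻¹ v) = v := a.apply_symm_apply v
    rw [h1, h2] at h
    exact h.symm

open Polynomial

namespace LinearMap.IsAdjointPair

variable {R M N : Type*} [CommRing R] [AddCommGroup M] [Module R M] [AddCommGroup N] [Module R N]
  {B : M →ₗ[R] M →ₗ[R] N} {f g : Module.End R M}

theorem aeval (h : IsAdjointPair B B f g) (p : R[X]) :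
    IsAdjointPair B B (Polynomial.aeval f p) (Polynomial.aeval g p) := by
  induction p using Polynomial.induction_on with
  | C a =>
    simpa only [aeval_C, Algebra.algebraMap_eq_smul_one, coe_smul] using isAdjointPair_one.smul a
  | add p q hp hq =>
    rw [map_add, map_add]
    exact hp.add hq
  | monomial n a ih =>
    have hf : Polynomial.aeval f (C a * X ^ (n + 1)) = f * Polynomial.aeval f (C a * X ^ n) := by
      rw [pow_succ', mul_left_comm, map_mul, aeval_X]
    have hg : Polynomial.aeval g (C a * X ^ (n + 1)) = Polynomial.aeval g (C a * X ^ n) * g := by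
      rw [pow_succ, ← mul_assoc, map_mul, aeval_X]
    rw [hf, hg]
    exact h.mul ih

theorem aeval_eq_zero (h : IsAdjointPair B B f g) (hB : B.SeparatingRight) {p : R[X]}
    (hp : Polynomial.aeval f p = 0) : Polynomial.aeval g p = 0 :=
  LinearMap.ext fun y => hB _ fun x => by rw [← h.aeval p x y, hp, zero_apply, map_zero₂]

end LinearMap.IsAdjointPair

namespace AdjoinRoot

section Automorphism

variable {R : Type*} [CommRing R] {f : R[X]}

theorem existsUnique_algEquiv_apply_root_mul_root_eq_one (hu : IsUnit (root f))
    (hf : aeval (↑hu.unit⁻¹ : AdjoinRoot f) f = 0) :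
    ∃! σ : AdjoinRoot f ≃ₐ[R] AdjoinRoot f, σ (root f) * root f = 1 := by
  set ψ := liftAlgHom f (Algebra.ofId R _) (↑hu.unit⁻¹ : AdjoinRoot f) hf
  have hψ_root : ψ (root f) = ↑hu.unit⁻¹ := liftAlgHom_root ..
  have hψ_inv : ψ ↑hu.unit⁻¹ = root f := by
    have h := congrArg ψ hu.unit.inv_mul
    rw [map_mul, map_one, IsUnit.unit_spec, hψ_root, Units.mul_eq_one_iff_eq_inv, inv_inv] at h
    exact h
  have hψ_involutive : ψ.comp ψ = AlgHom.id R _ := algHom_ext <| by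
    rw [AlgHom.comp_apply, hψ_root, hψ_inv, AlgHom.id_apply]
  refine ⟨AlgEquiv.ofAlgHom ψ ψ hψ_involutive hψ_involutive, ?_, fun σ hσ => ?_⟩
  · exact (congrArg (· * root f) hψ_root).trans hu.unit.inv_mul
  refine AlgEquiv.coe_toAlgHom_injective (algHom_ext ?_)
  exact (Units.mul_eq_one_iff_eq_inv (u := hu.unit)).mp hσ |>.trans hψ_root.symm

end Automorphism

section Minpoly

variable {F A : Type*} [Field F] [Ring A] [Algebra F A]

variable (F) in
noncomputable def minpolyEval (a : A) : AdjoinRoot (minpoly F a) →ₐ[F] A :=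
  Ideal.Quotient.liftₐ _ (aeval a) fun p hp => by
    obtain ⟨q, rfl⟩ := Ideal.mem_span_singleton.mp hp
    rw [map_mul, minpoly.aeval, zero_mul]

@[simp]
theorem minpolyEval_mk (a : A) (p : F[X]) : minpolyEval F a (mk _ p) = aeval a p := rfl

@[simp]
theorem minpolyEval_root (a : A) : minpolyEval F a (root _) = a := by
  rw [← mk_X, minpolyEval_mk, aeval_X]

theorem minpolyEval_injective (a : A) : Function.Injective (minpolyEval F a) := by
  refine (injective_iff_map_eq_zero _).mpr fun x hx => ?_
  obtain ⟨p, rfl⟩ := mk_surjective x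
  exact mk_eq_zero.mpr (minpoly.dvd F a hx)

variable {a : Aˣ} (ha : IsIntegral F (a : A))
include ha

theorem isUnit_root_minpoly : IsUnit (root (minpoly F (a : A))) := by
  have : Module.Finite F (AdjoinRoot (minpoly F (a : A))) :=
    (powerBasis (minpoly.ne_zero ha)).finite
  have : IsArtinianRing (AdjoinRoot (minpoly F (a : A))) := .of_finite F _
  refine IsArtinianRing.isUnit_of_mem_nonZeroDivisors <|
    mem_nonZeroDivisors_of_injective (minpolyEval_injective (F := F) (a : A)) ?_
  rw [minpolyEval_root]
  exact a.isUnit.mem_nonZeroDivisors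

theorem minpolyEval_inv_root :
    minpolyEval F (a : A) ↑(isUnit_root_minpoly ha).unit⁻¹ = ↑a⁻¹ := by
  rw [← Units.mul_eq_one_iff_eq_inv]
  calc _ = minpolyEval F (a : A) (↑(isUnit_root_minpoly ha).unit⁻¹ * root _) := by
        rw [map_mul, minpolyEval_root]
    _ = 1 := by rw [IsUnit.val_inv_mul, map_one]

theorem aeval_inv_root_minpoly (h : aeval (↑a⁻¹ : A) (minpoly F (a : A)) = 0) :
    aeval (↑(isUnit_root_minpoly ha).unit⁻¹ : AdjoinRoot (minpoly F (a : A)))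
      (minpoly F (a : A)) = 0 := by
  apply minpolyEval_injective (F := F) (a : A)
  rw [← aeval_algHom_apply, minpolyEval_inv_root ha, h, map_zero]

end Minpoly

end AdjoinRoot

theorem isAdjointPair_of_mem_isometryGroup {F V : Type*} [Field F] [AddCommGroup V] [Module F V]
    {B : LinearMap.BilinForm F V} {T : V ≃ₗ[F] V} (hT : T ∈ isometryGroup F B) :
    LinearMap.IsAdjointPair B B (T : Module.End F V) (T.symm : Module.End F V) := fun x y => by
  simpa using hT x (T.symm y)

theorem adjoinRoot_minpoly_automorphism_general
    (F : Type*) [Field F]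
    (V : Type*) [AddCommGroup V] [Module F V] [FiniteDimensional F V]
    (B : LinearMap.BilinForm F V) (hnd : B.Nondegenerate)
    (T : V ≃ₗ[F] V) (hT : T ∈ isometryGroup F B)
    (m : Polynomial F) (hm : m = minpoly F ((T : V →ₗ[F] V) : Module.End F V)) :
    IsUnit (AdjoinRoot.root m) ∧
    ∃! σ : AdjoinRoot m ≃ₐ[F] AdjoinRoot m,
      σ (AdjoinRoot.root m) * AdjoinRoot.root m = 1 := by
  subst hm
  let u : (Module.End F V)ˣ :=
    ⟨T, T.symm, LinearMap.ext T.apply_symm_apply, LinearMap.ext T.symm_apply_apply⟩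
  have hu : IsIntegral F (u : Module.End F V) := Algebra.IsIntegral.isIntegral _
  have hinv : aeval (↑u⁻¹ : Module.End F V) (minpoly F (u : Module.End F V)) = 0 :=
    (isAdjointPair_of_mem_isometryGroup hT).aeval_eq_zero hnd.2 (minpoly.aeval F _)
  rw [show minpoly F (T : Module.End F V) = minpoly F (u : Module.End F V) from rfl]
  exact ⟨AdjoinRoot.isUnit_root_minpoly hu,
    AdjoinRoot.existsUnique_algEquiv_apply_root_mul_root_eq_one _
      (AdjoinRoot.aeval_inv_root_minpoly hu hinv)⟩

/-- Let `m` be the minimal polynomial of an isometry `T` of a nonzero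
nondegenerate space and let `A = F[X]/(m)`.  Then the image `t` of `X` in `A`
is a unit, and there is a unique `F`-algebra automorphism `σ` of `A` with
`σ(t) = t⁻¹` (expressed as `σ t * t = 1`). -/
theorem adjoinRoot_minpoly_automorphism
    (F : Type*) [Field F] (hchar : ringChar F ≠ 2)
    (V : Type*) [AddCommGroup V] [Module F V] [FiniteDimensional F V] [Nontrivial V]
    (B : LinearMap.BilinForm F V) (hB : B.IsSymm ∨ B.IsAlt) (hnd : B.Nondegenerate)
    (T : V ≃ₗ[F] V) (hT : T ∈ isometryGroup F B)
    (m : Polynomial F) (hm : m = minpoly F ((T : V →ₗ[F] V) : Module.End F V)) :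
    IsUnit (AdjoinRoot.root m) ∧
    ∃! σ : AdjoinRoot m ≃ₐ[F] AdjoinRoot m,
      σ (AdjoinRoot.root m) * AdjoinRoot.root m = 1 :=
  adjoinRoot_minpoly_automorphism_general F V B hnd T hT m hm
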